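/- Let M be the q-matroid whose flats are the intersections of the blocks of an S(t,k,n;q) Steiner system (E,𝓑). Then the rank function of M is: r(A) = dim A if dim A ≤ t; r(A) = t if dim A > t and A is contained in some block of 𝓑; and r(A) = t+1 if dim A > t and A is contained in no block. Consequently M is a q-PMD: any two flats of the same rank have the same dimension. -/

import Mathlib

/-- F' covers F in the poset (𝓕, ⊆). -/
def FlatCovers {K E : Type*} [Field K] [AddCommGroup E] [Module K E]
    (𝓕 : Set (Submodule K E)) (F F' : Submodule K E) : Prop :=
  F < F' ∧ ∀ H ∈ 𝓕, F < H → ¬ H < F'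

/-- `c` is a maximal chain of length `m` in (𝓕,⊆) from `a` to `b`. -/
def IsMaxChainTo {K E : Type*} [Field K] [AddCommGroup E] [Module K E]
    (𝓕 : Set (Submodule K E)) (a b : Submodule K E) (m : ℕ)
    (c : Fin (m + 1) → Submodule K E) : Prop :=
  (∀ i, c i ∈ 𝓕) ∧ StrictMono c ∧ c 0 = a ∧ c (Fin.last m) = b ∧
  ∀ i : Fin m, FlatCovers 𝓕 (c i.castSucc) (c i.succ)

/-- 𝓑 is a q-Steiner system S(t,k,n;q) on E = K^n. -/
def IsSteinerSystem {K : Type*} [Field K] [Fintype K] {n : ℕ}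
    (t k : ℕ) (𝓑 : Set (Submodule K (Fin n → K))) : Prop :=
  1 ≤ t ∧ t ≤ k ∧ k ≤ n ∧
  (∀ B ∈ 𝓑, Module.finrank K B = k) ∧
  (∀ T : Submodule K (Fin n → K), Module.finrank K T = t → ∃! B, B ∈ 𝓑 ∧ T ≤ B)

/-
The flats of the Steiner system are exactly the subspaces of dimension `< t`, the blocks, and `E`.
Two distinct blocks meet in dimension `< t`, since a `t`-space lies in only one block. Conversely a
subspace `A` with `dim A < t` is the intersection of the blocks through it: given `x ∉ A`, enlarge
`A` to a `(t-1)`-space still avoiding `x`; if every block through it contained `x`, all of them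
would be the block of `A + ⟨x⟩`, and since every vector lies in one of them that block would be `E`.
Hence `flatRank` goes up by exactly one along every cover of flats, so `r A` is the `flatRank` of
the closure of `A`, and on flats `flatRank` determines the dimension.
-/

open Module Submodule

section LinearAlgebra

variable {K V : Type*} [Field K] [AddCommGroup V] [Module K V]

theorem Submodule.exists_le_finrank_eq (P : Submodule K V) {m : ℕ} (hm : m ≤ finrank K P) :
    ∃ T ≤ P, finrank K T = m := by
  obtain ⟨f, hf⟩ := exists_linearIndependent_of_le_finrank hm
  refine ⟨span K (Set.range (P.subtype ∘ f)), ?_, ?_⟩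
  · rw [span_le]
    rintro _ ⟨i, rfl⟩
    exact (f i).2
  · rw [finrank_span_eq_card (hf.map' P.subtype P.ker_subtype), Fintype.card_fin]

theorem Submodule.mem_sup_span_singleton_exchange {A : Submodule K V} {x y : V}
    (hx : x ∈ A ⊔ span K {y}) (hxA : x ∉ A) : y ∈ A ⊔ span K {x} := by
  rw [sup_comm, ← span_eq A, ← span_insert] at hx ⊢
  exact mem_span_insert_exchange hx (by rwa [span_eq])

theorem Submodule.exists_le_finrank_eq_notMem [FiniteDimensional K V] {A : Submodule K V} {x : V}
    (hx : x ∉ A) {m : ℕ} (hAm : finrank K A ≤ m) (hm : m < finrank K V) :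
    ∃ A', A ≤ A' ∧ x ∉ A' ∧ finrank K A' = m := by
  induction m, hAm using Nat.le_induction with
  | base => exact ⟨A, le_rfl, hx, rfl⟩
  | succ m hAm ih =>
    obtain ⟨A', hAA', hxA', rfl⟩ := ih (by omega)
    obtain ⟨y, hy⟩ : ∃ y, y ∉ A' ⊔ span K {x} := by
      by_contra! h
      have := finrank_sup_span_singleton hxA'
      rw [show A' ⊔ span K {x} = ⊤ from eq_top_iff.2 fun y _ => h y, finrank_top] at this
      omega
    refine ⟨A' ⊔ span K {y}, hAA'.trans le_sup_left,
      fun hx' => hy (mem_sup_span_singleton_exchange hx' hxA'), ?_⟩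
    exact finrank_sup_span_singleton fun h => hy (mem_sup_left h)

open Classical in
noncomputable def flatRank (t : ℕ) (F : Submodule K V) : ℕ :=
  if finrank K F < t then finrank K F else if F = ⊤ then t + 1 else t

theorem flatRank_of_finrank_lt {t : ℕ} {F : Submodule K V} (h : finrank K F < t) :
    flatRank t F = finrank K F := by
  rw [flatRank, if_pos h]

theorem flatRank_of_le_finrank_of_ne_top {t : ℕ} {F : Submodule K V} (h : t ≤ finrank K F)
    (hF : F ≠ ⊤) : flatRank t F = t := by
  rw [flatRank, if_neg h.not_gt, if_neg hF]

theorem flatRank_top {t : ℕ} (h : t ≤ finrank K V) :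
    flatRank t (⊤ : Submodule K V) = t + 1 := by
  rw [flatRank, if_neg (by rwa [finrank_top, not_lt]), if_pos rfl]

theorem IsMaxChainTo.apply_eq_add_of_covers {𝓕 : Set (Submodule K V)} {a b : Submodule K V}
    {m : ℕ} {c : Fin (m + 1) → Submodule K V} (h : IsMaxChainTo 𝓕 a b m c)
    (f : Submodule K V → ℕ)
    (hf : ∀ F ∈ 𝓕, ∀ F' ∈ 𝓕, FlatCovers 𝓕 F F' → f F' = f F + 1) : f b = f a + m := by
  obtain ⟨hmem, -, h0, hlast, hcov⟩ := h
  have key : ∀ i : Fin (m + 1), f (c i) = f a + i := by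
    intro i
    induction i using Fin.induction with
    | zero => simp [h0]
    | succ i ih => rw [hf _ (hmem _) _ (hmem _) (hcov i), ih]; simp [add_assoc]
  simpa [hlast] using key (Fin.last m)

def blockFlats (𝓑 : Set (Submodule K V)) : Set (Submodule K V) :=
  {F | ∃ S ⊆ 𝓑, F = sInf S}

theorem mem_blockFlats_of_mem {𝓑 : Set (Submodule K V)} {B : Submodule K V} (hB : B ∈ 𝓑) :
    B ∈ blockFlats 𝓑 :=
  ⟨{B}, Set.singleton_subset_iff.2 hB, sInf_singleton.symm⟩

end LinearAlgebra

namespace IsSteinerSystem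

variable {K : Type*} [Field K] [Fintype K] {n t k : ℕ} {𝓑 : Set (Submodule K (Fin n → K))}

theorem one_le (h𝓑 : IsSteinerSystem t k 𝓑) : 1 ≤ t := h𝓑.1

theorem finrank_block (h𝓑 : IsSteinerSystem t k 𝓑) {B : Submodule K (Fin n → K)}
    (hB : B ∈ 𝓑) : finrank K B = k :=
  h𝓑.2.2.2.1 B hB

theorem existsUnique_block (h𝓑 : IsSteinerSystem t k 𝓑) {T : Submodule K (Fin n → K)}
    (hT : finrank K T = t) : ∃! B, B ∈ 𝓑 ∧ T ≤ B :=
  h𝓑.2.2.2.2 T hT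

theorem le_finrank_of_mem (h𝓑 : IsSteinerSystem t k 𝓑) {B : Submodule K (Fin n → K)}
    (hB : B ∈ 𝓑) : t ≤ finrank K B :=
  h𝓑.finrank_block hB ▸ h𝓑.2.1

theorem le_finrank (h𝓑 : IsSteinerSystem t k 𝓑) : t ≤ finrank K (Fin n → K) := by
  rw [finrank_fin_fun]
  exact h𝓑.2.1.trans h𝓑.2.2.1

theorem block_ne_top (h𝓑 : IsSteinerSystem t k 𝓑) (hkn : k < n)
    {B : Submodule K (Fin n → K)} (hB : B ∈ 𝓑) : B ≠ ⊤ := by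
  intro h
  have := h𝓑.finrank_block hB
  rw [h, finrank_top, finrank_fin_fun] at this
  omega

theorem eq_of_le (h𝓑 : IsSteinerSystem t k 𝓑) {B B' : Submodule K (Fin n → K)}
    (hB : B ∈ 𝓑) (hB' : B' ∈ 𝓑) (h : B ≤ B') : B = B' :=
  eq_of_le_of_finrank_eq h (by rw [h𝓑.finrank_block hB, h𝓑.finrank_block hB'])

theorem finrank_inf_lt (h𝓑 : IsSteinerSystem t k 𝓑) {B B' : Submodule K (Fin n → K)}
    (hB : B ∈ 𝓑) (hB' : B' ∈ 𝓑) (hne : B ≠ B') : finrank K ↥(B ⊓ B') < t := by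
  by_contra! h
  obtain ⟨T, hT, hTt⟩ := (B ⊓ B').exists_le_finrank_eq h
  obtain ⟨_, -, huniq⟩ := h𝓑.existsUnique_block hTt
  exact hne <|
    (huniq B ⟨hB, hT.trans inf_le_left⟩).trans (huniq B' ⟨hB', hT.trans inf_le_right⟩).symm

theorem exists_block_notMem_of_finrank_add_one (h𝓑 : IsSteinerSystem t k 𝓑) (hkn : k < n)
    {A : Submodule K (Fin n → K)} {x : Fin n → K} (hA : finrank K A + 1 = t) (hx : x ∉ A) :
    ∃ B ∈ 𝓑, A ≤ B ∧ x ∉ B := by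
  by_contra! hcon
  obtain ⟨B₀, ⟨hB₀, hAxB₀⟩, huniq⟩ :=
    h𝓑.existsUnique_block (by rw [finrank_sup_span_singleton hx, hA])
  refine h𝓑.block_ne_top hkn hB₀ (eq_top_iff.2 fun v _ => ?_)
  by_cases hvA : v ∈ A
  · exact hAxB₀ (mem_sup_left hvA)
  obtain ⟨B, ⟨hB, hAvB⟩, -⟩ :=
    h𝓑.existsUnique_block (by rw [finrank_sup_span_singleton hvA, hA])
  have hAB : A ≤ B := le_sup_left.trans hAvB
  have hBB₀ : B = B₀ := huniq B ⟨hB, sup_le hAB (span_le.2 (by simpa using hcon B hB hAB))⟩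
  exact hBB₀ ▸ hAvB (mem_sup_right (mem_span_singleton_self v))

theorem exists_block_notMem (h𝓑 : IsSteinerSystem t k 𝓑) (hkn : k < n)
    {A : Submodule K (Fin n → K)} {x : Fin n → K} (hA : finrank K A < t) (hx : x ∉ A) :
    ∃ B ∈ 𝓑, A ≤ B ∧ x ∉ B := by
  obtain ⟨A', hAA', hxA', hA'⟩ := exists_le_finrank_eq_notMem hx (m := t - 1)
    (Nat.le_sub_one_of_lt hA) (by have := h𝓑.le_finrank; have := h𝓑.one_le; omega)
  obtain ⟨B, hB, hA'B, hxB⟩ := h𝓑.exists_block_notMem_of_finrank_add_one hkn (by omega) hxA'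
  exact ⟨B, hB, hAA'.trans hA'B, hxB⟩

theorem mem_blockFlats_of_finrank_lt (h𝓑 : IsSteinerSystem t k 𝓑) (hkn : k < n)
    {A : Submodule K (Fin n → K)} (hA : finrank K A < t) : A ∈ blockFlats 𝓑 := by
  refine ⟨{B | B ∈ 𝓑 ∧ A ≤ B}, fun B hB => hB.1, le_antisymm (le_sInf fun B hB => hB.2) ?_⟩
  intro v hv
  by_contra hvA
  obtain ⟨B, hB, hAB, hvB⟩ := h𝓑.exists_block_notMem hkn hA hvA
  exact hvB (mem_sInf.1 hv B ⟨hB, hAB⟩)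

theorem finrank_lt_or_mem_or_eq_top (h𝓑 : IsSteinerSystem t k 𝓑)
    {F : Submodule K (Fin n → K)} (hF : F ∈ blockFlats 𝓑) : finrank K F < t ∨ F ∈ 𝓑 ∨ F = ⊤ := by
  obtain ⟨S, hS, rfl⟩ := hF
  rcases S.subsingleton_or_nontrivial with hS₁ | ⟨B, hB, B', hB', hne⟩
  · rcases hS₁.eq_empty_or_singleton with rfl | ⟨B, rfl⟩
    · exact Or.inr (Or.inr sInf_empty)
    · exact Or.inr (Or.inl (by rw [sInf_singleton]; exact hS rfl))
  · left
    calc finrank K ↥(sInf S) ≤ finrank K ↥(B ⊓ B') :=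
          finrank_mono (le_inf (sInf_le hB) (sInf_le hB'))
      _ < t := h𝓑.finrank_inf_lt (hS hB) (hS hB') hne

theorem flatRank_eq_of_le_block (h𝓑 : IsSteinerSystem t k 𝓑) (hkn : k < n)
    {F B : Submodule K (Fin n → K)} (hF : t ≤ finrank K F) (hB : B ∈ 𝓑) (hFB : F ≤ B) :
    flatRank t F = t :=
  flatRank_of_le_finrank_of_ne_top hF fun htop =>
    h𝓑.block_ne_top hkn hB (top_le_iff.1 (htop ▸ hFB))

theorem flatRank_of_flatCovers (h𝓑 : IsSteinerSystem t k 𝓑) (hkn : k < n)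
    {F F' : Submodule K (Fin n → K)} (hF : F ∈ blockFlats 𝓑) (hF' : F' ∈ blockFlats 𝓑)
    (hcov : FlatCovers (blockFlats 𝓑) F F') : flatRank t F' = flatRank t F + 1 := by
  obtain ⟨hlt, hmax⟩ := hcov
  rcases h𝓑.finrank_lt_or_mem_or_eq_top hF with hFt | hFB | rfl
  · obtain ⟨x, hxF', hxF⟩ := SetLike.exists_of_lt hlt
    have hG := finrank_sup_span_singleton hxF
    have hGF' : F ⊔ span K {x} ≤ F' := sup_le hlt.le (span_le.2 (by simpa using hxF'))
    have hFG : F < F ⊔ span K {x} :=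
      left_lt_sup.2 fun h => hxF (h (mem_span_singleton_self x))
    rw [flatRank_of_finrank_lt hFt]
    rcases (show finrank K F + 1 ≤ t from hFt).lt_or_eq with hGt | hGt
    · have hGflat := h𝓑.mem_blockFlats_of_finrank_lt hkn (hG.trans_lt hGt)
      rw [← hGF'.lt_or_eq.resolve_left (hmax _ hGflat hFG), flatRank_of_finrank_lt (by omega), hG]
    · obtain ⟨B, ⟨hB, hGB⟩, -⟩ := h𝓑.existsUnique_block (hG.trans hGt)
      have hF't : t ≤ finrank K F' := hGt ▸ hG ▸ finrank_mono hGF'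
      rw [flatRank_of_le_finrank_of_ne_top hF't ?_, ← hGt]
      rintro rfl
      exact hmax B (mem_blockFlats_of_mem hB) (hFG.trans_le hGB) (h𝓑.block_ne_top hkn hB).lt_top
  · rw [h𝓑.flatRank_eq_of_le_block hkn (h𝓑.le_finrank_of_mem hFB) hFB le_rfl]
    rcases h𝓑.finrank_lt_or_mem_or_eq_top hF' with hF't | hF'B | rfl
    · exact absurd (finrank_mono hlt.le) (by have := h𝓑.le_finrank_of_mem hFB; omega)
    · exact absurd (h𝓑.eq_of_le hFB hF'B hlt.le) hlt.ne
    · exact flatRank_top h𝓑.le_finrank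
  · exact absurd hlt not_top_lt

theorem finrank_eq_of_mem_blockFlats (h𝓑 : IsSteinerSystem t k 𝓑) (hkn : k < n)
    {F : Submodule K (Fin n → K)} (hF : F ∈ blockFlats 𝓑) :
    finrank K F = if flatRank t F < t then flatRank t F else if flatRank t F = t then k else n := by
  rcases h𝓑.finrank_lt_or_mem_or_eq_top hF with hFt | hFB | rfl
  · rw [flatRank_of_finrank_lt hFt, if_pos hFt]
  · rw [h𝓑.flatRank_eq_of_le_block hkn (h𝓑.le_finrank_of_mem hFB) hFB le_rfl,
      if_neg (lt_irrefl t), if_pos rfl, h𝓑.finrank_block hFB]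
  · rw [flatRank_top h𝓑.le_finrank, if_neg (by omega), if_neg (by omega), finrank_top,
      finrank_fin_fun]

end IsSteinerSystem

theorem stmt11 {K : Type*} [Field K] [Fintype K] {n t k : ℕ}
    (𝓑 : Set (Submodule K (Fin n → K))) (h𝓑 : IsSteinerSystem t k 𝓑)
    (hkn : k < n)
    (C : Submodule K (Fin n → K) → Submodule K (Fin n → K))
    (hC : ∀ A : Submodule K (Fin n → K),
      C A ∈ {F | ∃ S ⊆ 𝓑, F = sInf S} ∧ A ≤ C A ∧
      ∀ G ∈ {F : Submodule K (Fin n → K) | ∃ S ⊆ 𝓑, F = sInf S}, A ≤ G → C A ≤ G)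
    (r : Submodule K (Fin n → K) → ℕ)
    (hr : ∀ A : Submodule K (Fin n → K),
      ∃ c : Fin (r A + 1) → Submodule K (Fin n → K),
        IsMaxChainTo {F | ∃ S ⊆ 𝓑, F = sInf S} (C ⊥) (C A) (r A) c) :
    (∀ A : Submodule K (Fin n → K),
      (Module.finrank K A ≤ t → r A = Module.finrank K A) ∧
      (t < Module.finrank K A → (∃ B ∈ 𝓑, A ≤ B) → r A = t) ∧
      (t < Module.finrank K A → (¬ ∃ B ∈ 𝓑, A ≤ B) → r A = t + 1)) ∧
    (∀ F₁ ∈ {F : Submodule K (Fin n → K) | ∃ S ⊆ 𝓑, F = sInf S},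
     ∀ F₂ ∈ {F : Submodule K (Fin n → K) | ∃ S ⊆ 𝓑, F = sInf S},
      r F₁ = r F₂ → Module.finrank K F₁ = Module.finrank K F₂) := by
  have hCflat : ∀ F ∈ blockFlats 𝓑, C F = F := fun F hF =>
    le_antisymm ((hC F).2.2 F hF le_rfl) (hC F).2.1
  have hrank : ∀ A, r A = flatRank t (C A) := by
    intro A
    obtain ⟨c, hc⟩ := hr A
    have hbot : finrank K (⊥ : Submodule K (Fin n → K)) < t := by
      rw [finrank_bot]; exact h𝓑.one_le
    have := hc.apply_eq_add_of_covers (flatRank t) fun F hF F' hF' =>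
      h𝓑.flatRank_of_flatCovers hkn hF hF'
    rwa [hCflat ⊥ (h𝓑.mem_blockFlats_of_finrank_lt hkn hbot), flatRank_of_finrank_lt hbot,
      finrank_bot, zero_add, eq_comm] at this
  have hblock : ∀ A : Submodule K (Fin n → K), t ≤ finrank K A → ∀ B ∈ 𝓑, A ≤ B → r A = t := by
    intro A hA B hB hAB
    rw [hrank A]
    exact h𝓑.flatRank_eq_of_le_block hkn (hA.trans (finrank_mono (hC A).2.1)) hB
      ((hC A).2.2 B (mem_blockFlats_of_mem hB) hAB)
  refine ⟨fun A => ⟨fun hA => ?_, fun hA ⟨B, hB, hAB⟩ => hblock A hA.le B hB hAB,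
    fun hA hAB => ?_⟩, fun F₁ hF₁ F₂ hF₂ h => ?_⟩
  · rcases hA.lt_or_eq with hA | hA
    · rw [hrank, hCflat A (h𝓑.mem_blockFlats_of_finrank_lt hkn hA), flatRank_of_finrank_lt hA]
    · obtain ⟨B, ⟨hB, hAB⟩, -⟩ := h𝓑.existsUnique_block hA
      rw [hblock A hA.ge B hB hAB, hA]
  · rcases h𝓑.finrank_lt_or_mem_or_eq_top (hC A).1 with hCA | hCA | hCA
    · exact absurd (finrank_mono (hC A).2.1) (by omega)
    · exact absurd ⟨C A, hCA, (hC A).2.1⟩ hAB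
    · rw [hrank, hCA, flatRank_top h𝓑.le_finrank]
  · rw [hrank, hrank, hCflat F₁ hF₁, hCflat F₂ hF₂] at h
    rw [h𝓑.finrank_eq_of_mem_blockFlats hkn hF₁, h, ← h𝓑.finrank_eq_of_mem_blockFlats hkn hF₂]
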